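/- Proposition 5, equation (prop5:2). Let M, N be positive integers and let μ be an integer with M+1 ≤ μ ≤ M+N. Let w₀, w₀' be free complex variables and let (w_j, w_j') for j = 1, …, μ−1 be pairs carrying the U_q(ŝl(M|N)) exchange factors (H^b for j ≤ M−1, H^0 for j = M, H^f for j ≥ M+1). Define D(u, u') = (u' − q w₁)(w₁' − q u) · Π_{j=1}^{M−1} (w_j' − q w_{j+1})(w_{j+1}' − q w_j) · Π_{j=M}^{μ−2} (q w_j' − w_{j+1})(q w_{j+1}' − w_j). Then D(w₀', w₀) ∼ ((q² w₀' − w₀)/(q² w₀ − w₀')) · D(w₀, w₀') with respect to the pairs (w₁, w₁'), …, (w_{μ−1}, w_{μ−1}'). -/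

import Mathlib

/-- Bosonic exchange factor `H^b(u,v) = -(q²v - u)/(q²u - v)`. -/
noncomputable def Hb (q u v : ℂ) : ℂ := -(q ^ 2 * v - u) / (q ^ 2 * u - v)

/-- Fermionic exchange factor `H^f(u,v) = -(q²u - v)/(q²v - u)`. -/
noncomputable def Hf (q u v : ℂ) : ℂ := -(q ^ 2 * u - v) / (q ^ 2 * v - u)

/-- Exchange factor assignment for `U_q(sl^(M|N))`: bosonic for `j < M`,
the constant `-1` for `j = M`, fermionic for `j > M`. -/
noncomputable def Hex (M : ℕ) (q : ℂ) (j : ℕ) : ℂ → ℂ → ℂ :=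
  if j < M then Hb q else if j = M then fun _ _ => -1 else Hf q

/-- Interchange `w_j` and `w_j'` for every `j ∈ σ`. -/
def swapOn (σ : Finset ℕ) (w w' : ℕ → ℂ) : ℕ → ℂ := fun j => if j ∈ σ then w' j else w j

/-- Weak equality `F ∼ G` with respect to the pairs `(w_j, w_j')`, `j ∈ J`,
carrying exchange factors `H j`. -/
def WeakEq (J : Finset ℕ) (H : ℕ → ℂ → ℂ → ℂ) (w w' : ℕ → ℂ)
    (F G : (ℕ → ℂ) → (ℕ → ℂ) → ℂ) : Prop :=
  ∑ σ ∈ J.powerset, (∏ j ∈ σ, H j (w' j) (w j)) * F (swapOn σ w w') (swapOn σ w' w)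
    = ∑ σ ∈ J.powerset, (∏ j ∈ σ, H j (w' j) (w j)) * G (swapOn σ w w') (swapOn σ w' w)

/-- `D(u, u') = (u' − q w₁)(w₁' − q u) · Π_{j=1}^{M−1} (w_j' − q w_{j+1})(w_{j+1}' − q w_j)
· Π_{j=M}^{μ−2} (q w_j' − w_{j+1})(q w_{j+1}' − w_j)`. -/
noncomputable def Dmix (q : ℂ) (M μ : ℕ) (x y : ℂ) (u u' : ℕ → ℂ) : ℂ :=
  (y - q * u 1) * (u' 1 - q * x) *
    (∏ j ∈ Finset.Ico 1 M, (u' j - q * u (j + 1)) * (u' (j + 1) - q * u j)) *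
    ∏ j ∈ Finset.Ico M (μ - 1), (q * u' j - u (j + 1)) * (q * u' (j + 1) - u j)

/-!
Write `D(x, y) = (y - q u₁)(u₁' - q x) · C(u, u')`, where the chain `C` is the product of the
link factors coupling consecutive pairs. Summing out the top pair of a chain multiplies the
shorter chain by a transfer of the top weight: on the fermionic side the transfer keeps weights
symmetric in `(u, u')`; at the pair `M`, whose exchange factor is `-1`, it turns a symmetric
weight into a multiple of `u' - q² u`; on the bosonic side it keeps such multiples; and at the
first pair both kinds of weight sum to zero. Hence `C` times a symmetric weight of its top pair
is weakly zero, and so is `C` times any symmetric function of `(u₁, u₁')`, which is invariant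
under the swaps and hence a constant. Splitting off the symmetric part of the boundary factor,
`(y - q u₁)(u₁' - q x) · C ∼ (q² x - y) · u₁ · C`, so both sides of the proposition are weakly
equal to `(q² w₀' - w₀) · u₁ · C`.
-/

namespace SlMN

open Finset Function

noncomputable def weakSum (J : Finset ℕ) (H : ℕ → ℂ → ℂ → ℂ) (w w' : ℕ → ℂ)
    (F : (ℕ → ℂ) → (ℕ → ℂ) → ℂ) : ℂ :=
  ∑ σ ∈ J.powerset, (∏ j ∈ σ, H j (w' j) (w j)) * F (swapOn σ w w') (swapOn σ w' w)

lemma weakEq_iff {J : Finset ℕ} {H : ℕ → ℂ → ℂ → ℂ} {w w' : ℕ → ℂ}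
    {F G : (ℕ → ℂ) → (ℕ → ℂ) → ℂ} :
    WeakEq J H w w' F G ↔ weakSum J H w w' F = weakSum J H w w' G :=
  Iff.rfl

section swapOn

variable (σ : Finset ℕ) (w w' : ℕ → ℂ)

lemma swapOn_of_notMem {j : ℕ} (h : j ∉ σ) : swapOn σ w w' j = w j := if_neg h

lemma swapOn_insert (k : ℕ) : swapOn (insert k σ) w w' = update (swapOn σ w w') k (w' k) := by
  funext j
  by_cases hj : j = k
  · subst hj; simp [swapOn]
  · simp [swapOn, hj]

lemma swapOn_empty : swapOn ∅ w w' = w := by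
  funext j; simp [swapOn]

lemma update_swapOn_of_notMem {k : ℕ} (h : k ∉ σ) :
    update (swapOn σ w w') k (w k) = swapOn σ w w' := by
  rw [← swapOn_of_notMem σ w w' h, update_eq_self]

lemma apply_swapOn_of_symm {S : ℂ → ℂ → ℂ} (hS : ∀ a b, S a b = S b a) (j : ℕ) :
    S (swapOn σ w w' j) (swapOn σ w' w j) = S (w j) (w' j) := by
  unfold swapOn
  split_ifs
  exacts [hS _ _, rfl]

end swapOn

section weakSum

variable {J : Finset ℕ} {H : ℕ → ℂ → ℂ → ℂ} {w w' : ℕ → ℂ}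

lemma weakSum_congr {F G : (ℕ → ℂ) → (ℕ → ℂ) → ℂ}
    (h : ∀ σ ∈ J.powerset,
      F (swapOn σ w w') (swapOn σ w' w) = G (swapOn σ w w') (swapOn σ w' w)) :
    weakSum J H w w' F = weakSum J H w w' G :=
  sum_congr rfl fun σ hσ => by rw [h σ hσ]

lemma weakSum_add (F G : (ℕ → ℂ) → (ℕ → ℂ) → ℂ) :
    weakSum J H w w' (fun u u' => F u u' + G u u') =
      weakSum J H w w' F + weakSum J H w w' G := by
  simp only [weakSum, mul_add, sum_add_distrib]

lemma weakSum_const_mul (c : ℂ) (F : (ℕ → ℂ) → (ℕ → ℂ) → ℂ) :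
    weakSum J H w w' (fun u u' => c * F u u') = c * weakSum J H w w' F := by
  simp only [weakSum, mul_sum, mul_left_comm]

lemma weakSum_insert {k : ℕ} (hk : k ∉ J) (F : (ℕ → ℂ) → (ℕ → ℂ) → ℂ) :
    weakSum (insert k J) H w w' F = weakSum J H w w' (fun u u' =>
      F (update u k (w k)) (update u' k (w' k)) +
        H k (w' k) (w k) * F (update u k (w' k)) (update u' k (w k))) := by
  unfold weakSum
  rw [sum_powerset_insert hk, ← sum_add_distrib]
  refine sum_congr rfl fun σ hσ => ?_
  have hkσ : k ∉ σ := fun h => hk (mem_powerset.mp hσ h)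
  rw [prod_insert hkσ, swapOn_insert, swapOn_insert]
  beta_reduce
  rw [update_swapOn_of_notMem σ w w' hkσ, update_swapOn_of_notMem σ w' w hkσ]
  ring

lemma weakSum_singleton (k : ℕ) (F : (ℕ → ℂ) → (ℕ → ℂ) → ℂ) :
    weakSum {k} H w w' F =
      F w w' + H k (w' k) (w k) * F (update w k (w' k)) (update w' k (w k)) := by
  rw [← insert_empty, weakSum_insert (notMem_empty k)]
  simp only [weakSum, powerset_empty, sum_singleton, prod_empty, one_mul, swapOn_empty,
    update_eq_self]

end weakSum

noncomputable def link (q : ℂ) (M j : ℕ) (x x' y y' : ℂ) : ℂ :=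
  if j < M then (x' - q * y) * (y' - q * x) else (q * x' - y) * (q * y' - x)

noncomputable def chain (q : ℂ) (M n : ℕ) (u u' : ℕ → ℂ) : ℂ :=
  ∏ j ∈ Ico 1 n, link q M j (u j) (u' j) (u (j + 1)) (u' (j + 1))

noncomputable def transfer (q : ℂ) (M n : ℕ) (c c' : ℂ) (W : ℂ → ℂ → ℂ)
    (x x' : ℂ) : ℂ :=
  link q M n x x' c c' * W c c' + Hex M q (n + 1) c' c * link q M n x x' c' c * W c' c

section chain

variable (q : ℂ) (M : ℕ) (w w' : ℕ → ℂ)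

lemma Dmix_eq_mul_chain {n : ℕ} (hM : 1 ≤ M) (hn : M ≤ n) (x y : ℂ) (u u' : ℕ → ℂ) :
    Dmix q M (n + 1) x y u u' = (y - q * u 1) * (u' 1 - q * x) * chain q M n u u' := by
  rw [Dmix, chain, ← prod_Ico_consecutive _ hM hn, Nat.add_sub_cancel, mul_assoc]
  congr 2
  · exact prod_congr rfl fun j hj => by rw [link, if_pos (mem_Ico.mp hj).2]
  · exact prod_congr rfl fun j hj => by rw [link, if_neg (not_lt.mpr (mem_Ico.mp hj).1)]

lemma chain_update_succ {n : ℕ} (hn : 1 ≤ n) (u u' : ℕ → ℂ) (a a' : ℂ) :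
    chain q M (n + 1) (update u (n + 1) a) (update u' (n + 1) a') =
      chain q M n u u' * link q M n (u n) (u' n) a a' := by
  rw [chain, prod_Ico_succ_top hn]
  congr 1
  · refine prod_congr rfl fun j hj => ?_
    have hj := (mem_Ico.mp hj).2
    rw [update_of_ne (by omega), update_of_ne (by omega), update_of_ne (by omega),
      update_of_ne (by omega)]
  · rw [update_of_ne (by omega), update_of_ne (by omega), update_self, update_self]

lemma weakSum_chain_succ {n : ℕ} (hn : 1 ≤ n) (W : ℂ → ℂ → ℂ) :
    weakSum (Ico 1 (n + 1 + 1)) (Hex M q) w w'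
        (fun u u' => chain q M (n + 1) u u' * W (u (n + 1)) (u' (n + 1))) =
      weakSum (Ico 1 (n + 1)) (Hex M q) w w'
        (fun u u' =>
          chain q M n u u' * transfer q M n (w (n + 1)) (w' (n + 1)) W (u n) (u' n)) := by
  rw [Ico_add_one_right_eq_Icc, ← Ico_insert_right (by omega), weakSum_insert (by simp)]
  congr 1
  funext u u'
  simp only [chain_update_succ q M hn, update_self, transfer]
  ring

lemma weakSum_chain_succ_of_transfer_eq {n : ℕ} (hn : 1 ≤ n) {W V : ℂ → ℂ → ℂ}
    {κ : ℂ} (h : ∀ x x', transfer q M n (w (n + 1)) (w' (n + 1)) W x x' = κ * V x x') :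
    weakSum (Ico 1 (n + 1 + 1)) (Hex M q) w w'
        (fun u u' => chain q M (n + 1) u u' * W (u (n + 1)) (u' (n + 1))) =
      κ * weakSum (Ico 1 (n + 1)) (Hex M q) w w'
        (fun u u' => chain q M n u u' * V (u n) (u' n)) := by
  rw [weakSum_chain_succ q M w w' hn, ← weakSum_const_mul]
  congr 1
  funext u u'
  rw [h]
  ring

end chain

section transfer

variable {q : ℂ} {M n : ℕ} {c c' : ℂ}

lemma transfer_boson (hn : n + 1 < M) (hc : q ^ 2 * c' ≠ c) (x x' : ℂ) :
    transfer q M n c c' (fun y y' => y' - q ^ 2 * y) x x' =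
      (c' - q ^ 2 * c) * (c' - c) * (x' - q ^ 2 * x) := by
  have hc' : q ^ 2 * c' - c ≠ 0 := sub_ne_zero.mpr hc
  rw [transfer, show Hex M q (n + 1) = Hb q from if_pos hn, link, if_pos (by omega), link,
    if_pos (by omega), Hb]
  field_simp
  ring

lemma transfer_junction (hn : n + 1 = M) {W : ℂ → ℂ → ℂ} (hW : ∀ a b, W a b = W b a)
    (x x' : ℂ) : transfer q M n c c' W x x' = W c c' * (c' - c) * (x' - q ^ 2 * x) := by
  subst hn
  simp only [transfer, Hex, lt_irrefl, if_false, if_true, link, Nat.lt_succ_self]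
  rw [hW c' c]
  ring

lemma transfer_symm (hn : M ≤ n) (hc : q ^ 2 * c ≠ c') {W : ℂ → ℂ → ℂ}
    (hW : ∀ a b, W a b = W b a) (x x' : ℂ) :
    transfer q M n c c' W x x' = transfer q M n c c' W x' x := by
  have hc' : q ^ 2 * c - c' ≠ 0 := sub_ne_zero.mpr hc
  have hHex : Hex M q (n + 1) = Hf q := by
    rw [Hex, if_neg (by omega), if_neg (by omega)]
  simp only [transfer, hHex, link, if_neg (not_lt.mpr hn), Hf, hW c' c]
  field_simp
  ring

end transfer

section vanishing

variable {q : ℂ} {M : ℕ} {w w' : ℕ → ℂ}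

lemma weakSum_chain_boson_eq_zero {n : ℕ} (hn : 1 ≤ n) (hnM : n < M)
    (hden : ∀ j ∈ Ico 1 (n + 1), q ^ 2 * w' j ≠ w j) :
    weakSum (Ico 1 (n + 1)) (Hex M q) w w'
      (fun u u' => chain q M n u u' * (u' n - q ^ 2 * u n)) = 0 := by
  induction n, hn using Nat.le_induction with
  | base =>
    have h1 : w' 1 * q ^ 2 - w 1 ≠ 0 := by
      rw [mul_comm]; exact sub_ne_zero.mpr (hden 1 (by simp))
    rw [show Ico 1 (1 + 1) = {1} from rfl, weakSum_singleton]
    simp only [chain, Ico_self, prod_empty, update_self, Hex, if_pos hnM, Hb]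
    field_simp
    ring
  | succ n hn ih =>
    have hc := hden (n + 1) (by simp)
    rw [weakSum_chain_succ_of_transfer_eq q M w w' hn (transfer_boson hnM hc),
      ih (by omega) fun j hj => hden j (by simp at hj ⊢; omega), mul_zero]

lemma weakSum_chain_symm_eq_zero {n : ℕ} (hM : 1 ≤ M) (hn : M ≤ n)
    (hden : ∀ j ∈ Ico 1 (n + 1),
      (j < M → q ^ 2 * w' j ≠ w j) ∧ (M < j → q ^ 2 * w j ≠ w' j))
    {W : ℂ → ℂ → ℂ} (hW : ∀ a b, W a b = W b a) :
    weakSum (Ico 1 (n + 1)) (Hex M q) w w'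
      (fun u u' => chain q M n u u' * W (u n) (u' n)) = 0 := by
  induction n, hn using Nat.le_induction generalizing W with
  | base =>
    obtain rfl | hM := hM.eq_or_lt
    · rw [show Ico 1 (1 + 1) = {1} from rfl, weakSum_singleton]
      simp only [chain, Ico_self, prod_empty, update_self, Hex, lt_irrefl, if_false, if_true,
        hW (w' 1)]
      ring
    obtain ⟨m, rfl⟩ : ∃ m, M = m + 1 + 1 := ⟨M - 2, by omega⟩
    rw [weakSum_chain_succ_of_transfer_eq q _ w w' (by omega) (transfer_junction rfl hW),
      weakSum_chain_boson_eq_zero (by omega) (by omega)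
        fun j hj => (hden j (by simp at hj ⊢; omega)).1 (by simp at hj; omega), mul_zero]
  | succ n hn ih =>
    have hc := (hden (n + 1) (by simp)).2 (by omega)
    rw [weakSum_chain_succ q M w w' (by omega) W]
    exact ih (fun j hj => hden j (by simp at hj ⊢; omega)) (transfer_symm hn hc hW)

lemma weakSum_boundary_mul_chain {n : ℕ} (hM : 1 ≤ M) (hn : M ≤ n)
    (hden : ∀ j ∈ Ico 1 (n + 1),
      (j < M → q ^ 2 * w' j ≠ w j) ∧ (M < j → q ^ 2 * w j ≠ w' j))
    (x y : ℂ) :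
    weakSum (Ico 1 (n + 1)) (Hex M q) w w'
        (fun u u' => (y - q * u 1) * (u' 1 - q * x) * chain q M n u u') =
      (q ^ 2 * x - y) *
        weakSum (Ico 1 (n + 1)) (Hex M q) w w' (fun u u' => u 1 * chain q M n u u') := by
  set S : ℂ → ℂ → ℂ := fun a a' => y * (a + a') - q * x * y - q * a * a'
  have hS : ∀ a a', S a a' = S a' a := fun a a' => by simp only [S]; ring
  have hchain := weakSum_chain_symm_eq_zero hM hn hden (W := fun _ _ => 1) fun _ _ => rfl
  simp only [mul_one] at hchain
  calc _ = weakSum (Ico 1 (n + 1)) (Hex M q) w w' (fun u u' =>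
        (q ^ 2 * x - y) * (u 1 * chain q M n u u') + S (u 1) (u' 1) * chain q M n u u') := by
        congr 1; funext u u'; simp only [S]; ring
    _ = (q ^ 2 * x - y) *
          weakSum (Ico 1 (n + 1)) (Hex M q) w w' (fun u u' => u 1 * chain q M n u u') +
        S (w 1) (w' 1) * weakSum (Ico 1 (n + 1)) (Hex M q) w w' (chain q M n) := by
        rw [weakSum_add, weakSum_const_mul,
          weakSum_congr (F := fun u u' => S (u 1) (u' 1) * chain q M n u u')
            (G := fun u u' => S (w 1) (w' 1) * chain q M n u u')
            fun σ _ => by rw [apply_swapOn_of_symm σ w w' hS], weakSum_const_mul]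
    _ = _ := by rw [hchain, mul_zero, add_zero]

end vanishing

end SlMN

open SlMN Finset

theorem proposition5_second_general (M : ℕ) (hM : 1 ≤ M)
    (μ : ℕ) (hμ1 : M + 1 ≤ μ)
    (q : ℂ) (w w' : ℕ → ℂ)
    (h0 : q ^ 2 * w 0 ≠ w' 0)
    (hden : ∀ j ∈ Finset.Ico 1 μ,
      (j < M → q ^ 2 * w' j ≠ w j) ∧ (M < j → q ^ 2 * w j ≠ w' j)) :
    WeakEq (Finset.Ico 1 μ) (Hex M q) w w'
      (fun u u' => Dmix q M μ (u' 0) (u 0) u u')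
      (fun u u' =>
        ((q ^ 2 * u' 0 - u 0) / (q ^ 2 * u 0 - u' 0)) * Dmix q M μ (u 0) (u' 0) u u') := by
  obtain ⟨n, rfl⟩ : ∃ n, μ = n + 1 := ⟨μ - 1, by omega⟩
  have hn : M ≤ n := by omega
  have hfix : ∀ σ ∈ (Ico 1 (n + 1)).powerset, ∀ v v' : ℕ → ℂ, swapOn σ v v' 0 = v 0 :=
    fun σ hσ v v' => swapOn_of_notMem σ v v' fun h => by simpa using mem_powerset.mp hσ h
  rw [weakEq_iff]
  conv_lhs => rw [weakSum_congr
    (G := fun u u' => (w 0 - q * u 1) * (u' 1 - q * w' 0) * chain q M n u u')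
    fun σ hσ => by rw [hfix σ hσ, hfix σ hσ, Dmix_eq_mul_chain q M hM hn]]
  conv_rhs => rw [weakSum_congr
    (G := fun u u' => (q ^ 2 * w' 0 - w 0) / (q ^ 2 * w 0 - w' 0) *
      ((w' 0 - q * u 1) * (u' 1 - q * w 0) * chain q M n u u'))
    fun σ hσ => by rw [hfix σ hσ, hfix σ hσ, Dmix_eq_mul_chain q M hM hn], weakSum_const_mul]
  rw [weakSum_boundary_mul_chain hM hn hden, weakSum_boundary_mul_chain hM hn hden]
  field_simp [sub_ne_zero.mpr h0]

/-- Proposition 5, eq. (prop5:2): for `M+1 ≤ μ ≤ M+N`,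
`D(w₀', w₀) ∼ ((q² w₀' − w₀)/(q² w₀ − w₀')) D(w₀, w₀')` with respect to the pairs
`(w₁, w₁'), …, (w_{μ−1}, w_{μ−1}')` carrying the `U_q(sl^(M|N))` exchange factors. -/
theorem proposition5_second (M N : ℕ) (hM : 1 ≤ M) (hN : 1 ≤ N)
    (μ : ℕ) (hμ1 : M + 1 ≤ μ) (hμ2 : μ ≤ M + N)
    (q : ℂ) (hq : q ≠ 0) (hq2 : q ^ 2 ≠ 1) (w w' : ℕ → ℂ)
    (h0 : q ^ 2 * w 0 ≠ w' 0)
    (hden : ∀ j ∈ Finset.Ico 1 μ,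
      (j < M → q ^ 2 * w' j ≠ w j) ∧ (M < j → q ^ 2 * w j ≠ w' j)) :
    WeakEq (Finset.Ico 1 μ) (Hex M q) w w'
      (fun u u' => Dmix q M μ (u' 0) (u 0) u u')
      (fun u u' =>
        ((q ^ 2 * u' 0 - u 0) / (q ^ 2 * u 0 - u' 0)) * Dmix q M μ (u 0) (u' 0) u u') :=
  proposition5_second_general M hM μ hμ1 q w w' h0 hden
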